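/- (Linearization of the rotational strain, Eq. A.3) Let Λ_t : ℝ → Matrix(3,3,ℝ) be differentiable with Λ_t(s)ᵀ Λ_t(s) = I and det Λ_t(s) = 1 for all s, and let Δψ : ℝ → ℝ³ be differentiable. For ε ∈ ℝ define K̂_ε(s) = (exp(ε (Δψ(s))^) Λ_t(s))ᵀ · d/ds [exp(ε (Δψ(s))^) Λ_t(s)]. Then for each s the map ε ↦ K̂_ε(s) is differentiable at ε = 0 with derivative Λ_t(s)ᵀ (Δψ′(s))^ Λ_t(s), which equals the hat matrix of the vector Λ_t(s)ᵀ Δψ′(s); i.e. the incremental material rotational strain vector is ΔK = Λ_tᵀ Δψ′. -/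

import Mathlib

open Matrix Real

/-- The hat (cross-product) operator: `hat v *ᵥ h = v ×₃ h`. -/
def hat (v : Fin 3 → ℝ) : Matrix (Fin 3) (Fin 3) ℝ :=
  !![0, -v 2, v 1; v 2, 0, -v 0; -v 1, v 0, 0]

/-- Euclidean norm of a vector in ℝ³. -/
noncomputable def norm3 (v : Fin 3 → ℝ) : ℝ := ‖(WithLp.equiv 2 (Fin 3 → ℝ)).symm v‖

/-- Entrywise derivative of a matrix-valued curve. -/
noncomputable def mderiv (Λ : ℝ → Matrix (Fin 3) (Fin 3) ℝ) (s : ℝ) :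
    Matrix (Fin 3) (Fin 3) ℝ :=
  Matrix.of fun i j => deriv (fun t => Λ t i j) s

attribute [local instance] Matrix.linftyOpNormedAddCommGroup Matrix.linftyOpNormedSpace
  Matrix.linftyOpNormedRing Matrix.linftyOpNormedAlgebra

namespace RotStrainAux

lemma hat_transpose (v : Fin 3 → ℝ) : (hat v)ᵀ = -hat v := by
  ext i j; fin_cases i <;> fin_cases j <;> simp [hat]

lemma key_alg (A : Matrix (Fin 3) (Fin 3) ℝ) (v : Fin 3 → ℝ) :
    Aᵀ * hat (A *ᵥ v) * A = A.det • hat v := by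
  ext i j
  fin_cases i <;> fin_cases j <;>
    simp [hat, Matrix.mul_apply, Matrix.mulVec, dotProduct, Matrix.det_fin_three,
      Fin.sum_univ_three] <;> ring

lemma matrix_sum (A : Matrix (Fin 3) (Fin 3) ℝ) :
    A = ∑ p : Fin 3 × Fin 3, A p.1 p.2 • Matrix.single p.1 p.2 (1 : ℝ) := by
  ext i j
  simp [Matrix.sum_apply, Matrix.single, Fintype.sum_prod_type, ite_and, Finset.sum_ite_eq,
    Finset.sum_ite_eq']

noncomputable def entryCLM (i j : Fin 3) : Matrix (Fin 3) (Fin 3) ℝ →L[ℝ] ℝ :=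
  LinearMap.toContinuousLinearMap
    { toFun := fun A => A i j
      map_add' := fun _ _ => rfl
      map_smul' := fun _ _ => rfl }

lemma hasDerivAt_entry {F : ℝ → Matrix (Fin 3) (Fin 3) ℝ} {F' : Matrix (Fin 3) (Fin 3) ℝ}
    {s : ℝ} (h : HasDerivAt F F' s) (i j : Fin 3) :
    HasDerivAt (fun t => F t i j) (F' i j) s := by
  have := (entryCLM i j).hasFDerivAt.comp_hasDerivAt s h
  exact this

lemma hasDerivAt_matrix {F : ℝ → Matrix (Fin 3) (Fin 3) ℝ} {F' : Matrix (Fin 3) (Fin 3) ℝ}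
    {s : ℝ} (h : ∀ i j, HasDerivAt (fun t => F t i j) (F' i j) s) :
    HasDerivAt F F' s := by
  have h2 : HasDerivAt
      (fun t => ∑ p : Fin 3 × Fin 3, F t p.1 p.2 • Matrix.single p.1 p.2 (1 : ℝ))
      (∑ p : Fin 3 × Fin 3, F' p.1 p.2 • Matrix.single p.1 p.2 (1 : ℝ)) s :=
    HasDerivAt.fun_sum fun p _ => (h p.1 p.2).smul_const _
  have e1 : F = fun t => ∑ p : Fin 3 × Fin 3, F t p.1 p.2 • Matrix.single p.1 p.2 (1 : ℝ) :=
    funext fun t => matrix_sum (F t)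
  rw [e1, matrix_sum F']
  exact h2

lemma hasDerivAt_hat {ψ : ℝ → Fin 3 → ℝ} {ψ' : Fin 3 → ℝ} {s : ℝ}
    (h : HasDerivAt ψ ψ' s) : HasDerivAt (fun t => hat (ψ t)) (hat ψ') s := by
  have hc : ∀ i, HasDerivAt (fun t => ψ t i) (ψ' i) s := hasDerivAt_pi.mp h
  apply hasDerivAt_matrix
  intro i j
  fin_cases i <;> fin_cases j <;> simp only [hat, Matrix.cons_val', Matrix.cons_val_zero,
    Matrix.cons_val_one, Matrix.head_cons, Matrix.empty_val', Matrix.cons_val_fin_one,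
    Matrix.head_fin_const, Matrix.of_apply, Matrix.cons_val_two, Matrix.tail_cons,
    Fin.isValue] <;>
  first
    | exact hasDerivAt_const _ _
    | exact (hc 0)
    | exact (hc 1)
    | exact (hc 2)
    | exact (hc 0).neg
    | exact (hc 1).neg
    | exact (hc 2).neg

lemma hasDerivAt_mul_of_continuousAt {g : ℝ → ℝ} (hg : ContinuousAt g 0) :
    HasDerivAt (fun ε => ε * g ε) (g 0) 0 := by
  rw [hasDerivAt_iff_tendsto_slope]
  have h1 : slope (fun ε => ε * g ε) 0 =ᶠ[nhdsWithin 0 {(0:ℝ)}ᶜ] g := by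
    filter_upwards [self_mem_nhdsWithin] with ε (hε : ε ≠ 0)
    simp only [slope, vsub_eq_sub, sub_zero, smul_eq_mul, mul_zero, zero_mul]
    field_simp
  exact Filter.Tendsto.congr' h1.symm (hg.tendsto.mono_left nhdsWithin_le_nhds)

end RotStrainAux

open RotStrainAux

/-- Linearization of the rotational strain (Eq. A.3): the incremental material rotational
strain vector is `ΔK = Λ_tᵀ Δψ′`. -/
theorem linearize_rotational_strain (Λt : ℝ → Matrix (Fin 3) (Fin 3) ℝ)
    (Δψ : ℝ → Fin 3 → ℝ)
    (hΛ : ∀ i j, Differentiable ℝ fun s => Λt s i j)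
    (horth : ∀ s, (Λt s)ᵀ * Λt s = 1) (hdet : ∀ s, (Λt s).det = 1)
    (hψ : Differentiable ℝ Δψ) :
    let Khat : ℝ → ℝ → Matrix (Fin 3) (Fin 3) ℝ := fun ε s =>
      (NormedSpace.exp (ε • hat (Δψ s)) * Λt s)ᵀ *
        mderiv (fun t => NormedSpace.exp (ε • hat (Δψ t)) * Λt t) s
    ∀ s : ℝ,
      (∀ i j, HasDerivAt (fun ε => Khat ε s i j)
          (((Λt s)ᵀ * hat (deriv Δψ s) * Λt s) i j) 0) ∧
        (Λt s)ᵀ * hat (deriv Δψ s) * Λt s = hat ((Λt s)ᵀ *ᵥ deriv Δψ s) := by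
  intro Khat s
  have horth' : Λt s * (Λt s)ᵀ = 1 := mul_eq_one_comm.mp (horth s)
  set M' : Matrix (Fin 3) (Fin 3) ℝ := hat (deriv Δψ s) with hM'
  set L' : Matrix (Fin 3) (Fin 3) ℝ := mderiv Λt s with hL'
  have hMd : HasDerivAt (fun t => hat (Δψ t)) M' s := hasDerivAt_hat (hψ s).hasDerivAt
  have hΛd : HasDerivAt Λt L' s := by
    apply hasDerivAt_matrix
    intro i j
    simpa [hL', mderiv] using (hΛ i j s).hasDerivAt
  have hexpdiff : Differentiable ℝ
      (NormedSpace.exp : Matrix (Fin 3) (Fin 3) ℝ → Matrix (Fin 3) (Fin 3) ℝ) :=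
    fun x => (NormedSpace.exp_analytic x).differentiableAt
  have hCD : ContDiff ℝ (⊤ : ℕ∞)
      (NormedSpace.exp : Matrix (Fin 3) (Fin 3) ℝ → Matrix (Fin 3) (Fin 3) ℝ) :=
    contDiff_iff_contDiffAt.mpr fun x => (NormedSpace.exp_analytic x).contDiffAt
  set D : Matrix (Fin 3) (Fin 3) ℝ → Matrix (Fin 3) (Fin 3) ℝ →L[ℝ] Matrix (Fin 3) (Fin 3) ℝ :=
    fun X => fderiv ℝ (NormedSpace.exp) X with hD
  have hFt : ∀ ε : ℝ, HasDerivAt (fun t => NormedSpace.exp (ε • hat (Δψ t)))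
      (ε • (D (ε • hat (Δψ s))) M') s := by
    intro ε
    have h1 : HasDerivAt (fun t => ε • hat (Δψ t)) (ε • M') s := hMd.const_smul ε
    have h2 : HasFDerivAt (NormedSpace.exp) (D (ε • hat (Δψ s))) (ε • hat (Δψ s)) :=
      (hexpdiff _).hasFDerivAt
    have h3 := h2.comp_hasDerivAt s h1
    exact h3.congr_deriv ((D (ε • hat (Δψ s))).map_smul ε M')
  have hP : ∀ ε : ℝ, HasDerivAt (fun t => NormedSpace.exp (ε • hat (Δψ t)) * Λt t)
      ((ε • (D (ε • hat (Δψ s))) M') * Λt s + NormedSpace.exp (ε • hat (Δψ s)) * L') s :=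
    fun ε => (hFt ε).mul hΛd
  have hmd : ∀ ε : ℝ, mderiv (fun t => NormedSpace.exp (ε • hat (Δψ t)) * Λt t) s
      = (ε • (D (ε • hat (Δψ s))) M') * Λt s + NormedSpace.exp (ε • hat (Δψ s)) * L' := by
    intro ε
    ext i j
    simpa [mderiv] using (hasDerivAt_entry (hP ε) i j).deriv
  set G : ℝ → Matrix (Fin 3) (Fin 3) ℝ := fun ε =>
    (Λt s)ᵀ * NormedSpace.exp (-(ε • hat (Δψ s))) * ((D (ε • hat (Δψ s))) M') * Λt s with hG
  have hKform : ∀ ε : ℝ, Khat ε s = ε • G ε + (Λt s)ᵀ * L' := by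
    intro ε
    show (NormedSpace.exp (ε • hat (Δψ s)) * Λt s)ᵀ *
        mderiv (fun t => NormedSpace.exp (ε • hat (Δψ t)) * Λt t) s = _
    rw [hmd ε]
    have ht : (NormedSpace.exp (ε • hat (Δψ s)))ᵀ
        = NormedSpace.exp (-(ε • hat (Δψ s))) := by
      rw [← Matrix.exp_transpose]
      congr 1
      rw [Matrix.transpose_smul, hat_transpose, smul_neg]
    have hinv : NormedSpace.exp (-(ε • hat (Δψ s))) * NormedSpace.exp (ε • hat (Δψ s)) = 1 := by
      rw [← Matrix.exp_add_of_commute _ _ (Commute.refl (ε • hat (Δψ s))).neg_left]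
      simp [NormedSpace.exp_zero]
    have h3 : NormedSpace.exp (-(ε • hat (Δψ s))) * (NormedSpace.exp (ε • hat (Δψ s)) * L')
        = L' := by rw [← mul_assoc, hinv, one_mul]
    rw [Matrix.transpose_mul, ht]
    simp only [hG, mul_add, smul_mul_assoc, mul_smul_comm, mul_assoc, h3]
  have hG0 : G 0 = (Λt s)ᵀ * M' * Λt s := by
    have hD0 : D 0 = 1 := hasFDerivAt_exp_zero.fderiv
    simp [hG, hD0, NormedSpace.exp_zero, mul_assoc]
  have hGcont : Continuous G := by
    have hXc : Continuous fun ε : ℝ => ε • hat (Δψ s) := continuous_id.smul continuous_const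
    have hDc : Continuous D := hCD.continuous_fderiv (by simp)
    exact (((continuous_const.mul (hexpdiff.continuous.comp hXc.neg)).mul
      ((hDc.comp hXc).clm_apply continuous_const)).mul continuous_const)
  constructor
  · intro i j
    have hfun : (fun ε => Khat ε s i j) = fun ε => ε * G ε i j + ((Λt s)ᵀ * L') i j := by
      funext ε
      rw [hKform ε]
      simp [Matrix.add_apply, Matrix.smul_apply, smul_eq_mul]
    rw [hfun]
    have hc : ContinuousAt (fun ε => G ε i j) 0 :=
      ((entryCLM i j).continuous.comp hGcont).continuousAt
    have hd := (hasDerivAt_mul_of_continuousAt hc).add_const (((Λt s)ᵀ * L') i j)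
    have : G 0 i j = ((Λt s)ᵀ * M' * Λt s) i j := by rw [hG0]
    rwa [this] at hd
  · have h1 : Λt s *ᵥ ((Λt s)ᵀ *ᵥ deriv Δψ s) = deriv Δψ s := by
      rw [Matrix.mulVec_mulVec, horth', Matrix.one_mulVec]
    have h2 := key_alg (Λt s) ((Λt s)ᵀ *ᵥ deriv Δψ s)
    rw [h1, hdet s, one_smul] at h2
    exact h2
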